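/- arXiv:2605.13174 — 4 statements merged into one kernel-verified Lean document; each statement's English description precedes it below -/
import Mathlib

section
/- For a reproducing kernel Hilbert space H with kernel k and probability measures p, q with Bochner-integrable kernel embeddings, the squared MMD over the unit ball of H satisfies MMD²[p,q] = E_{x,x'~p}[k(x,x')] − 2 E_{x~p, y~q}[k(x,y)] + E_{y,y'~q}[k(y,y')]. -/
open MeasureTheory

section

variable {Ω Ω' H : Type*} [MeasurableSpace Ω] [MeasurableSpace Ω']
  [NormedAddCommGroup H] [InnerProductSpace ℝ H] [CompleteSpace H]

theorem integral_inner_const_real {μ : Measure Ω} {f : Ω → H} (hf : Integrable f μ) (c : H) :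
    ∫ x, inner ℝ (f x) c ∂μ = inner ℝ (∫ x, f x ∂μ) c := by
  simp_rw [real_inner_comm c]
  exact integral_inner hf c

theorem integral_integral_inner {μ : Measure Ω} {ν : Measure Ω'} {f : Ω → H} {g : Ω' → H}
    (hf : Integrable f μ) (hg : Integrable g ν) :
    ∫ x, ∫ y, inner ℝ (f x) (g y) ∂ν ∂μ = inner ℝ (∫ x, f x ∂μ) (∫ y, g y ∂ν) := by
  simp_rw [integral_inner hg]
  exact integral_inner_const_real hf _

end

theorem stmt_2_general {Ω : Type*} [MeasurableSpace Ω]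
    {H : Type*} [NormedAddCommGroup H] [InnerProductSpace ℝ H] [CompleteSpace H]
    (φ : Ω → H) (k : Ω → Ω → ℝ)
    (hk : ∀ x y, k x y = inner ℝ (φ x) (φ y))
    (p q : Measure Ω)
    (hφp : Integrable φ p) (hφq : Integrable φ q) :
    ‖(∫ x, φ x ∂p) - ∫ y, φ y ∂q‖ ^ 2
      = (∫ x, ∫ x', k x x' ∂p ∂p) - 2 * (∫ x, ∫ y, k x y ∂q ∂p)
        + ∫ y, ∫ y', k y y' ∂q ∂q := by
  simp_rw [hk, integral_integral_inner hφp hφp, integral_integral_inner hφp hφq,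
    integral_integral_inner hφq hφq, real_inner_self_eq_norm_sq]
  exact norm_sub_sq_real _ _

/-- For an RKHS `H` with feature map `φ` and kernel `k x y = ⟪φ x, φ y⟫`, and probability
measures `p, q` with Bochner-integrable kernel embeddings, the squared MMD over the unit ball
of `H` (which equals the squared norm of the difference of mean embeddings) satisfies
`MMD² = E_{x,x'~p}[k(x,x')] - 2 E_{x~p,y~q}[k(x,y)] + E_{y,y'~q}[k(y,y')]`. -/
theorem stmt_2 {Ω : Type*} [MeasurableSpace Ω]
    {H : Type*} [NormedAddCommGroup H] [InnerProductSpace ℝ H] [CompleteSpace H]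
    (φ : Ω → H) (k : Ω → Ω → ℝ)
    (hk : ∀ x y, k x y = inner ℝ (φ x) (φ y))
    (p q : Measure Ω) [IsProbabilityMeasure p] [IsProbabilityMeasure q]
    (hφp : Integrable φ p) (hφq : Integrable φ q) :
    ‖(∫ x, φ x ∂p) - ∫ y, φ y ∂q‖ ^ 2
      = (∫ x, ∫ x', k x x' ∂p ∂p) - 2 * (∫ x, ∫ y, k x y ∂q ∂p)
        + ∫ y, ∫ y', k y y' ∂q ∂q :=
  stmt_2_general φ k hk p q hφp hφq
end

section
/- If the MMD (over the unit ball of an RKHS with a universal kernel, hence dense in C_b) between 𝒯_♯(π_x ⊗ π_y) and π_{x,y} is zero, where 𝒯(x,y) = (T(x,y), y), then for all bounded continuous f₁: ℝⁿ→ℝ, E[f₁(T(x,y)) | y] = E[f₁(x̄) | ȳ = y] for π_y-almost every y, i.e., T(·,y)_♯ π_x = π_{x|y} a.e.-π_y. -/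
open MeasureTheory ProbabilityTheory

lemma integral_lipschitz {X : Type*} [MeasurableSpace X] [TopologicalSpace X]
    [OpensMeasurableSpace X]
    (μ : Measure X) [IsProbabilityMeasure μ] :
    LipschitzWith 1 (fun f : BoundedContinuousFunction X ℝ => ∫ x, f x ∂μ) := by
  refine LipschitzWith.of_dist_le_mul (fun f g => ?_)
  rw [NNReal.coe_one, one_mul, dist_eq_norm, dist_eq_norm, ← integral_sub (f.integrable μ) (g.integrable μ)]
  have := (f - g).norm_integral_le_norm μ
  simpa using this

lemma ext_of_forall_integral_eq {X : Type*} [MeasurableSpace X] [TopologicalSpace X]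
    [HasOuterApproxClosed X] [BorelSpace X]
    (μ ν : Measure X) [IsProbabilityMeasure μ] [IsProbabilityMeasure ν]
    (h : ∀ f : BoundedContinuousFunction X ℝ, ∫ x, f x ∂μ = ∫ x, f x ∂ν) : μ = ν := by
  refine ext_of_forall_lintegral_eq_of_IsFiniteMeasure (fun f => ?_)
  have hμ := BoundedContinuousFunction.lintegral_lt_top_of_nnreal μ f
  have hν := BoundedContinuousFunction.lintegral_lt_top_of_nnreal ν f
  rw [← ENNReal.toReal_eq_toReal_iff' hμ.ne hν.ne,
    BoundedContinuousFunction.toReal_lintegral_coe_eq_integral,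
    BoundedContinuousFunction.toReal_lintegral_coe_eq_integral]
  exact h (f.comp _ isometry_subtype_coe.lipschitz)

/-- If the MMD over the unit ball of an RKHS `𝓗` with a universal kernel (hence `𝓗` is dense in
the bounded continuous functions) between `𝒯_♯(π_x ⊗ π_y)` and `π_{x,y}` is zero — equivalently,
`E_{π_x⊗π_y}[f(T(x,y),y)] = E_{π_{x,y}}[f(x̄,ȳ)]` for all `f ∈ 𝓗`, where
`𝒯(x,y) = (T(x,y),y)` — then for every bounded continuous `f₁ : ℝⁿ → ℝ` and `π_y`-almost every
`y`, `E[f₁(T(x,y))] = E[f₁(x̄) | ȳ = y]`; that is, `T(·,y)_♯ π_x = π_{x|y}` a.e.-`π_y`. -/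
theorem stmt_5 {n m : ℕ}
    (T : (Fin n → ℝ) × (Fin m → ℝ) → (Fin n → ℝ)) (hT : Measurable T)
    (πxy : Measure ((Fin n → ℝ) × (Fin m → ℝ))) [IsProbabilityMeasure πxy]
    (πx : Measure (Fin n → ℝ)) (πy : Measure (Fin m → ℝ))
    [IsProbabilityMeasure πx] [IsProbabilityMeasure πy]
    (hπx : πxy.map Prod.fst = πx) (hπy : πxy.map Prod.snd = πy)
    (κ : Kernel (Fin m → ℝ) (Fin n → ℝ)) [IsMarkovKernel κ]
    (hκ : πxy = (πy.compProd κ).map Prod.swap)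
    -- the RKHS, viewed inside the bounded continuous functions
    (𝓗 : Set (BoundedContinuousFunction ((Fin n → ℝ) × (Fin m → ℝ)) ℝ))
    -- universality: the RKHS is dense in the bounded continuous functions
    (huniv : Dense 𝓗)
    -- vanishing MMD: expectations under the two couplings agree on the RKHS
    (hMMD : ∀ f ∈ 𝓗,
      ∫ z, f (T z, z.2) ∂(πx.prod πy) = ∫ z, f z ∂πxy) :
    (∀ f₁ : BoundedContinuousFunction (Fin n → ℝ) ℝ,
        ∀ᵐ y ∂πy, ∫ x, f₁ (T (x, y)) ∂πx = ∫ x, f₁ x ∂(κ y)) ∧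
    ∀ᵐ y ∂πy, πx.map (fun x => T (x, y)) = κ y := by
  -- the transported measure
  have h𝒯 : Measurable (fun z : (Fin n → ℝ) × (Fin m → ℝ) => (T z, z.2)) :=
    hT.prodMk measurable_snd
  set μ : Measure ((Fin n → ℝ) × (Fin m → ℝ)) :=
    (πx.prod πy).map (fun z => (T z, z.2)) with hμdef
  have : IsProbabilityMeasure μ := Measure.isProbabilityMeasure_map h𝒯.aemeasurable
  -- `μ = πxy` by density of the RKHS
  have hμπ : μ = πxy := by
    refine ext_of_forall_integral_eq μ πxy (fun f => ?_)
    have key : (fun f : BoundedContinuousFunction ((Fin n → ℝ) × (Fin m → ℝ)) ℝ =>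
        ∫ z, f z ∂μ) = fun f => ∫ z, f z ∂πxy := by
      refine Continuous.ext_on huniv (integral_lipschitz μ).continuous
        (integral_lipschitz πxy).continuous (fun g hg => ?_)
      rw [hμdef, integral_map h𝒯.aemeasurable g.continuous.measurable.aestronglyMeasurable]
      exact hMMD g hg
    exact congrFun key f
  -- the kernel `y ↦ T(·,y)_♯ πx`
  set κ' : Kernel (Fin m → ℝ) (Fin n → ℝ) :=
    ⟨fun y => πx.map (fun x => T (x, y)), by
      refine Measure.measurable_of_measurable_coe _ (fun s hs => ?_)
      have hmeas : ∀ y : Fin m → ℝ, Measurable (fun x => T (x, y)) := fun y =>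
        hT.comp (measurable_id.prodMk measurable_const)
      have heq : (fun y => (πx.map (fun x => T (x, y))) s)
          = fun y => πx ((fun x => (x, y)) ⁻¹' (T ⁻¹' s)) := by
        funext y
        rw [Measure.map_apply (hmeas y) hs]
        rfl
      rw [heq]
      exact measurable_measure_prodMk_right (hT hs)⟩ with hκ'def
  have hκ'app : ∀ y, κ' y = πx.map (fun x => T (x, y)) := fun y => rfl
  have : IsMarkovKernel κ' := by
    refine ⟨fun y => ?_⟩
    rw [hκ'app]
    exact Measure.isProbabilityMeasure_map (hT.comp (measurable_id.prodMk measurable_const)).aemeasurable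
  -- `πy ⊗ₘ κ' = πy ⊗ₘ κ`
  have hswap : πxy.map Prod.swap = πy.compProd κ := by
    rw [hκ, Measure.map_map measurable_swap measurable_swap]
    simp [Prod.swap_swap_eq]
  have hcomp : πy.compProd κ' = πy.compProd κ := by
    rw [← hswap, ← hμπ, hμdef, Measure.map_map measurable_swap h𝒯]
    ext s hs
    rw [Measure.compProd_apply hs,
      Measure.map_apply (measurable_swap.comp h𝒯) hs]
    have : (Prod.swap ∘ fun z : (Fin n → ℝ) × (Fin m → ℝ) => (T z, z.2)) ⁻¹' s
        = {z : (Fin n → ℝ) × (Fin m → ℝ) | (z.2, T z) ∈ s} := rfl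
    rw [this, Measure.prod_apply_symm (by exact (measurable_snd.prodMk hT) hs)]
    refine lintegral_congr (fun y => ?_)
    have hm : Measurable fun x => T (x, y) := hT.comp (measurable_id.prodMk measurable_const)
    rw [hκ'app, Measure.map_apply hm (measurable_prodMk_left hs)]
    rfl
  -- uniqueness of disintegration
  set ρ : Measure ((Fin m → ℝ) × (Fin n → ℝ)) := πy.compProd κ with hρdef
  have hρfst : ρ.fst = πy := Measure.fst_compProd πy κ
  have h1 : ∀ᵐ y ∂πy, κ y = ρ.condKernel y := by
    have := eq_condKernel_of_measure_eq_compProd (ρ := ρ) κ (by rw [hρfst])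
    rwa [hρfst] at this
  have h2 : ∀ᵐ y ∂πy, κ' y = ρ.condKernel y := by
    have := eq_condKernel_of_measure_eq_compProd (ρ := ρ) κ' (by rw [hρfst, ← hcomp])
    rwa [hρfst] at this
  have hmain : ∀ᵐ y ∂πy, πx.map (fun x => T (x, y)) = κ y := by
    filter_upwards [h1, h2] with y hy1 hy2
    rw [← hκ'app, hy2, hy1]
  refine ⟨fun f₁ => ?_, hmain⟩
  filter_upwards [hmain] with y hy
  rw [← hy]
  have hm : Measurable fun x => T (x, y) := hT.comp (measurable_id.prodMk measurable_const)
  exact (integral_map hm.aemeasurable f₁.continuous.measurable.aestronglyMeasurable).symm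
end

section
/- Let k be the Gaussian kernel with bandwidth b and let MMD²(𝒯) = E[k(𝒯(z̃),𝒯(z̃'))] − 2E[k(𝒯(z̃),z̄)] + E[k(z̄,z̄')] for a block map 𝒯(x,y)=(x+εv(x,y), y). Then the Gâteaux derivative of MMD² at the identity in direction v equals −(2/b²)E_{z̃,z̃'}[k(z̃,z̃')(x̃−x̃')ᵀ(v(z̃)−v(z̃'))] + (4/b²)E_{z̃,z̄}[k(z̃,z̄)(x̃−x̄)ᵀ v(z̃)]. -/
/-!
Moving `x` to `x + ε v` changes the Gaussian kernel only through `‖Δx + ε Δv‖²`, where `Δx` and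
`Δv` are the differences of the `x`-components and of the directions; differentiating in `ε` gives
`-(2/b²) k ⟪Δx + ε Δv, Δv⟫`. Since `s e^{-s²/b²} ≤ b`, this is bounded by a constant uniformly in
`ε` and in the sample points, so on finite measures we may differentiate under the double
integrals (merged into one by Fubini). The self-interaction term contributes `Δv = v z̃ - v z̃'`,
the cross term `Δv = v z̃` with a factor `-2`, and the data term does not depend on `ε`.
-/

open MeasureTheory Real Function

section

variable {E : Type*} [NormedAddCommGroup E] [InnerProductSpace ℝ E] {b : ℝ}

theorem mul_exp_neg_sq_div_sq_le (hb : 0 < b) (s : ℝ) : s * exp (-s ^ 2 / b ^ 2) ≤ b := by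
  have hlin : s ≤ b * (1 + s ^ 2 / b ^ 2) := by
    rw [show b * (1 + s ^ 2 / b ^ 2) = (b ^ 2 + s ^ 2) / b by field_simp, le_div_iff₀ hb]
    nlinarith [sq_nonneg (s - b)]
  rw [neg_div, exp_neg, ← div_eq_mul_inv, div_le_iff₀ (exp_pos _)]
  calc s ≤ b * (1 + s ^ 2 / b ^ 2) := hlin
    _ ≤ b * exp (s ^ 2 / b ^ 2) := by gcongr; linarith [add_one_le_exp (s ^ 2 / b ^ 2)]

theorem hasDerivAt_exp_neg_norm_add_smul_sq (x y : E) (r ε : ℝ) :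
    HasDerivAt (fun t : ℝ => exp (-(‖x + t • y‖ ^ 2 + r) / b ^ 2))
      (-(2 / b ^ 2) * (exp (-(‖x + ε • y‖ ^ 2 + r) / b ^ 2) * inner ℝ (x + ε • y) y)) ε := by
  have hline : HasDerivAt (fun t : ℝ => x + t • y) y ε := by
    simpa using ((hasDerivAt_id ε).smul_const y).const_add x
  exact ((hline.norm_sq.add_const r).neg.div_const (b ^ 2)).exp.congr_deriv
    (by simp only [Pi.neg_apply]; ring)

theorem abs_exp_neg_norm_sq_mul_inner_le (hb : 0 < b) {x y : E} {r D : ℝ} (hr : 0 ≤ r)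
    (hy : ‖y‖ ≤ D) : |exp (-(‖x‖ ^ 2 + r) / b ^ 2) * inner ℝ x y| ≤ b * D := by
  have hD : 0 ≤ D := (norm_nonneg y).trans hy
  calc |exp (-(‖x‖ ^ 2 + r) / b ^ 2) * inner ℝ x y|
      = exp (-(‖x‖ ^ 2 + r) / b ^ 2) * |inner ℝ x y| := by rw [abs_mul, abs_exp]
    _ ≤ exp (-‖x‖ ^ 2 / b ^ 2) * (‖x‖ * D) := by
        gcongr
        · linarith
        · exact (abs_real_inner_le_norm x y).trans (by gcongr)
    _ = ‖x‖ * exp (-‖x‖ ^ 2 / b ^ 2) * D := by ring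
    _ ≤ b * D := by gcongr; exact mul_exp_neg_sq_div_sq_le hb _

variable {α : Type*} [MeasurableSpace α] {μ : Measure α} [IsFiniteMeasure μ]

theorem integrable_exp_neg_div_sq {f : α → ℝ} (hf : Measurable f) (hf0 : ∀ a, 0 ≤ f a) :
    Integrable (fun a => exp (-f a / b ^ 2)) μ := by
  refine (integrable_const 1).mono' (by fun_prop) (.of_forall fun a => ?_)
  rw [norm_eq_abs, abs_exp, exp_le_one_iff, neg_div]
  exact neg_nonpos.2 (div_nonneg (hf0 a) (sq_nonneg b))

variable [MeasurableSpace E] [BorelSpace E] [SecondCountableTopology E]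

theorem integrable_exp_neg_norm_sq_mul_inner (hb : 0 < b) {p q : α → E} {r : α → ℝ} {D : ℝ}
    (hp : Measurable p) (hq : Measurable q) (hr : Measurable r) (hr0 : ∀ a, 0 ≤ r a)
    (hqD : ∀ a, ‖q a‖ ≤ D) :
    Integrable (fun a => exp (-(‖p a‖ ^ 2 + r a) / b ^ 2) * inner ℝ (p a) (q a)) μ :=
  (integrable_const (b * D)).mono' (by fun_prop)
    (.of_forall fun a => abs_exp_neg_norm_sq_mul_inner_le hb (hr0 a) (hqD a))

theorem hasDerivAt_integral_exp_neg_norm_add_smul_sq (hb : 0 < b) {p q : α → E} {r : α → ℝ}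
    {D : ℝ} (hp : Measurable p) (hq : Measurable q) (hr : Measurable r) (hr0 : ∀ a, 0 ≤ r a)
    (hqD : ∀ a, ‖q a‖ ≤ D) :
    HasDerivAt (fun ε : ℝ => ∫ a, exp (-(‖p a + ε • q a‖ ^ 2 + r a) / b ^ 2) ∂μ)
      (-(2 / b ^ 2) * ∫ a, exp (-(‖p a‖ ^ 2 + r a) / b ^ 2) * inner ℝ (p a) (q a) ∂μ) 0 := by
  have hderiv := hasDerivAt_integral_of_dominated_loc_of_deriv_le (μ := μ) (x₀ := 0)
    (bound := fun _ => 2 / b ^ 2 * (b * D)) Filter.univ_mem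
    (.of_forall fun ε => (integrable_exp_neg_div_sq (by fun_prop)
      fun a => add_nonneg (sq_nonneg _) (hr0 a)).aestronglyMeasurable)
    (integrable_exp_neg_div_sq (by fun_prop) fun a => add_nonneg (sq_nonneg _) (hr0 a))
    (by fun_prop)
    (.of_forall fun a ε _ => by
      rw [norm_mul, norm_neg, norm_div, norm_two, norm_pow, norm_eq_abs, abs_of_pos hb]
      exact mul_le_mul_of_nonneg_left (abs_exp_neg_norm_sq_mul_inner_le hb (hr0 a) (hqD a))
        (by positivity))
    (integrable_const _)
    (.of_forall fun a ε _ => hasDerivAt_exp_neg_norm_add_smul_sq (p a) (q a) (r a) ε)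
  simpa only [zero_smul, add_zero, integral_const_mul] using hderiv.2

variable {β : Type*} [MeasurableSpace β] {ν : Measure β} [IsFiniteMeasure ν]

theorem hasDerivAt_integral_integral_exp_neg_norm_add_smul_sq (hb : 0 < b) {p q : α → β → E}
    {r : α → β → ℝ} {D : ℝ} (hp : Measurable (uncurry p)) (hq : Measurable (uncurry q))
    (hr : Measurable (uncurry r)) (hr0 : ∀ a c, 0 ≤ r a c) (hqD : ∀ a c, ‖q a c‖ ≤ D) :
    HasDerivAt (fun ε : ℝ => ∫ a, ∫ c, exp (-(‖p a c + ε • q a c‖ ^ 2 + r a c) / b ^ 2) ∂ν ∂μ)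
      (-(2 / b ^ 2) *
        ∫ a, ∫ c, exp (-(‖p a c‖ ^ 2 + r a c) / b ^ 2) * inner ℝ (p a c) (q a c) ∂ν ∂μ) 0 := by
  have hF : (fun ε : ℝ => ∫ a, ∫ c, exp (-(‖p a c + ε • q a c‖ ^ 2 + r a c) / b ^ 2) ∂ν ∂μ) =
      fun ε : ℝ => ∫ w, exp (-(‖uncurry p w + ε • uncurry q w‖ ^ 2 + uncurry r w) / b ^ 2)
        ∂μ.prod ν :=
    funext fun ε => integral_integral
      (integrable_exp_neg_div_sq (by fun_prop) fun w => add_nonneg (sq_nonneg _) (hr0 w.1 w.2))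
  rw [hF, integral_integral (integrable_exp_neg_norm_sq_mul_inner hb hp hq hr
    (fun w => hr0 w.1 w.2) fun w => hqD w.1 w.2)]
  exact hasDerivAt_integral_exp_neg_norm_add_smul_sq hb hp hq hr (fun w => hr0 w.1 w.2)
    fun w => hqD w.1 w.2

end

/-- Gâteaux derivative of the squared MMD along a block perturbation.  With the Gaussian kernel
`k(z,z') = exp(-‖z-z'‖²/b²)` on `ℝⁿ × ℝᵐ`, the perturbed block map `𝒯_ε(x,y) = (x + ε v(x,y), y)`,
`z̃, z̃' ~ π_x ⊗ π_y` independent and `z̄, z̄' ~ π_{x,y}`, the function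
`ε ↦ MMD²(𝒯_ε) = E k(𝒯_ε z̃, 𝒯_ε z̃') - 2 E k(𝒯_ε z̃, z̄) + E k(z̄, z̄')`
has derivative at `ε = 0` equal to
`-(2/b²) E[k(z̃,z̃') (x̃-x̃')ᵀ(v(z̃)-v(z̃'))] + (4/b²) E[k(z̃,z̄) (x̃-x̄)ᵀ v(z̃)]`. -/
theorem stmt_18 {n m : ℕ} (b : ℝ) (hb : 0 < b)
    (πx : Measure (EuclideanSpace ℝ (Fin n))) (πy : Measure (EuclideanSpace ℝ (Fin m)))
    [IsProbabilityMeasure πx] [IsProbabilityMeasure πy]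
    (πxy : Measure (EuclideanSpace ℝ (Fin n) × EuclideanSpace ℝ (Fin m)))
    [IsProbabilityMeasure πxy]
    (k : (EuclideanSpace ℝ (Fin n) × EuclideanSpace ℝ (Fin m)) →
         (EuclideanSpace ℝ (Fin n) × EuclideanSpace ℝ (Fin m)) → ℝ)
    (hk : ∀ z z', k z z' =
      Real.exp (-(‖z.1 - z'.1‖ ^ 2 + ‖z.2 - z'.2‖ ^ 2) / b ^ 2))
    (v : EuclideanSpace ℝ (Fin n) × EuclideanSpace ℝ (Fin m) → EuclideanSpace ℝ (Fin n))
    (hv : Measurable v) (hvbdd : ∃ C, ∀ z, ‖v z‖ ≤ C) :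
    HasDerivAt
      (fun ε : ℝ =>
        (∫ z, ∫ z', k (z.1 + ε • v z, z.2) (z'.1 + ε • v z', z'.2)
            ∂(πx.prod πy) ∂(πx.prod πy))
        - 2 * (∫ z, ∫ w, k (z.1 + ε • v z, z.2) w ∂πxy ∂(πx.prod πy))
        + ∫ w, ∫ w', k w w' ∂πxy ∂πxy)
      (-(2 / b ^ 2) * (∫ z, ∫ z', k z z' * inner ℝ (z.1 - z'.1) (v z - v z')
            ∂(πx.prod πy) ∂(πx.prod πy))
        + (4 / b ^ 2) * ∫ z, ∫ w, k z w * inner ℝ (z.1 - w.1) (v z) ∂πxy ∂(πx.prod πy))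
      0 := by
  obtain ⟨C, hC⟩ := hvbdd
  have hself := hasDerivAt_integral_integral_exp_neg_norm_add_smul_sq (μ := πx.prod πy)
    (ν := πx.prod πy) hb (p := fun z z' => z.1 - z'.1) (q := fun z z' => v z - v z')
    (r := fun z z' => ‖z.2 - z'.2‖ ^ 2) (by fun_prop) (by fun_prop) (by fun_prop)
    (fun _ _ => sq_nonneg _) fun z z' => (norm_sub_le _ _).trans (add_le_add (hC z) (hC z'))
  have hcross := hasDerivAt_integral_integral_exp_neg_norm_add_smul_sq (μ := πx.prod πy)
    (ν := πxy) hb (p := fun z w => z.1 - w.1) (q := fun z _ => v z)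
    (r := fun z w => ‖z.2 - w.2‖ ^ 2) (by fun_prop) (by fun_prop) (by fun_prop)
    (fun _ _ => sq_nonneg _) fun z _ => hC z
  have hshift : ∀ (x y u w : EuclideanSpace ℝ (Fin n)) (ε : ℝ),
      x + ε • u - (y + ε • w) = x - y + ε • (u - w) := fun x y u w ε => by
    rw [smul_sub]; abel
  refine (((hself.sub (hcross.const_mul 2)).add_const (∫ w, ∫ w', k w w' ∂πxy ∂πxy)).congr_deriv
    ?_).congr_of_eventuallyEq (.of_forall fun ε => ?_)
  · simp only [hk]
    ring
  · simp only [hk, hshift, add_sub_right_comm _ (_ • _), Pi.sub_apply]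
end

section
/- If each component of a vector field v on ℝᵈ lies in the RKHS F_γ of the Gaussian kernel k_γ, then the directional derivative functional D_v MMD² = ⟨∇MMD², v⟩_{F_γ} holds with ∇MMD²(z) = −(2/b²)E_{z̃,z̃'}[k(z̃,z̃')(k_γ(z̃,z) − k_γ(z̃',z))(x̃−x̃')] + (4/b²)E_{z̃,z̄}[k(z̃,z̄)k_γ(z̃,z)(x̃−x̄)], i.e., the steepest-descent direction of MMD² within the unit ball of F_γᵈ is −∇MMD²/‖∇MMD²‖. -/
open MeasureTheory
open scoped RealInnerProductSpace

/-!
Each component of `v` is represented in `F_γ` by `V i`, so both double integrals of the Gâteaux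
derivative are integrals of `∑ i, ⟪V i, ·⟫` applied to `F_γ`-valued integrands. These integrands
are Bochner integrable because `|k(z,z') (x_i - x'_i)| ≤ b/2` and `‖k_γ(z,·)‖ = 1`, so the inner
products commute with the integrals and the functional becomes `∑ i, ⟪G i, V i⟫`. The lower bound
over the unit ball is Cauchy–Schwarz in `F_γⁿ`.
-/

noncomputable section

namespace Real

lemma mul_exp_neg_sq_div_sq_le {b : ℝ} (hb : 0 < b) (t : ℝ) :
    t * exp (-t ^ 2 / b ^ 2) ≤ b / 2 := by
  have h_amgm : t ≤ b / 2 * (t ^ 2 / b ^ 2 + 1) := by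
    have : b / 2 * (t ^ 2 / b ^ 2 + 1) - t = (t - b) ^ 2 / (2 * b) := by
      field_simp
      ring
    linarith [this, show 0 ≤ (t - b) ^ 2 / (2 * b) by positivity]
  calc t * exp (-t ^ 2 / b ^ 2)
      ≤ b / 2 * exp (t ^ 2 / b ^ 2) * exp (-t ^ 2 / b ^ 2) := by
        gcongr
        exact h_amgm.trans (by gcongr; exact add_one_le_exp _)
    _ = b / 2 := by rw [mul_assoc, ← exp_add, neg_div, add_neg_cancel, exp_zero, mul_one]

end Real

def gaussKernel {E E' : Type*} [SeminormedAddCommGroup E] [SeminormedAddCommGroup E'] (b : ℝ)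
    (z z' : E × E') : ℝ :=
  Real.exp (-(‖z.1 - z'.1‖ ^ 2 + ‖z.2 - z'.2‖ ^ 2) / b ^ 2)

lemma abs_gaussKernel_mul_apply_sub_le {ι E : Type*} [Fintype ι] [SeminormedAddCommGroup E]
    {b : ℝ} (hb : 0 < b) (z z' : EuclideanSpace ℝ ι × E) (i : ι) :
    |gaussKernel b z z' * (z.1 i - z'.1 i)| ≤ b / 2 := by
  have h_coord : |z.1 i - z'.1 i| ≤ ‖z.1 - z'.1‖ := by
    simpa using PiLp.norm_apply_le (z.1 - z'.1) i
  have h_drop : gaussKernel b z z' ≤ Real.exp (-‖z.1 - z'.1‖ ^ 2 / b ^ 2) := by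
    unfold gaussKernel
    gcongr
    nlinarith [sq_nonneg ‖z.2 - z'.2‖]
  rw [abs_mul, abs_of_pos (show 0 < gaussKernel b z z' from Real.exp_pos _)]
  calc gaussKernel b z z' * |z.1 i - z'.1 i|
      ≤ Real.exp (-‖z.1 - z'.1‖ ^ 2 / b ^ 2) * ‖z.1 - z'.1‖ :=
        mul_le_mul h_drop h_coord (abs_nonneg _) (Real.exp_pos _).le
    _ ≤ b / 2 := by rw [mul_comm]; exact Real.mul_exp_neg_sq_div_sq_le hb _

lemma integrable_gaussKernel_mul_apply_sub_smul {ι ι' F : Type*} [Fintype ι] [Fintype ι']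
    [NormedAddCommGroup F] [NormedSpace ℝ F] {b : ℝ} (hb : 0 < b)
    (μ : Measure (EuclideanSpace ℝ ι × EuclideanSpace ℝ ι')) [IsFiniteMeasure μ]
    (z : EuclideanSpace ℝ ι × EuclideanSpace ℝ ι') (i : ι)
    {g : EuclideanSpace ℝ ι × EuclideanSpace ℝ ι' → F} (hg : Continuous g) {C : ℝ}
    (hgC : ∀ w, ‖g w‖ ≤ C) :
    Integrable (fun w => (gaussKernel b z w * (z.1 i - w.1 i)) • g w) μ := by
  have h_cont : Continuous fun w => gaussKernel b z w * (z.1 i - w.1 i) := by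
    unfold gaussKernel
    fun_prop
  refine Integrable.of_bound (h_cont.smul hg).aestronglyMeasurable (b / 2 * C)
    (ae_of_all _ fun w => ?_)
  rw [norm_smul, Real.norm_eq_abs]
  exact mul_le_mul (abs_gaussKernel_mul_apply_sub_le hb z w i) (hgC w) (norm_nonneg _)
    (by positivity)

section InnerProduct

variable {F : Type*} [NormedAddCommGroup F] [InnerProductSpace ℝ F]

lemma continuous_of_continuous_inner {X : Type*} [TopologicalSpace X] {φ : X → F}
    (h : Continuous fun p : X × X => ⟪φ p.1, φ p.2⟫) : Continuous φ := by
  have h_comp : ∀ f g : X → X, Continuous f → Continuous g →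
      Continuous fun y => ⟪φ (f y), φ (g y)⟫ :=
    fun f g hf hg => h.comp (hf.prodMk hg)
  refine continuous_iff_continuousAt.2 fun x => tendsto_iff_norm_sub_tendsto_zero.2 ?_
  have h_norm : ∀ y, ‖φ y - φ x‖ =
      √(⟪φ y, φ y⟫ - 2 * ⟪φ y, φ x⟫ + ⟪φ x, φ x⟫) := fun y => by
    rw [← Real.sqrt_sq (norm_nonneg _), norm_sub_sq_real, real_inner_self_eq_norm_sq,
      real_inner_self_eq_norm_sq]
  have h_cont : Continuous fun y => √(⟪φ y, φ y⟫ - 2 * ⟪φ y, φ x⟫ + ⟪φ x, φ x⟫) :=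
    (((h_comp id id continuous_id continuous_id).sub
      (continuous_const.mul (h_comp id _ continuous_id continuous_const))).add
      continuous_const).sqrt
  have h_zero : √(⟪φ x, φ x⟫ - 2 * ⟪φ x, φ x⟫ + ⟪φ x, φ x⟫) = 0 := by
    ring_nf
    exact Real.sqrt_zero
  have h_lim := h_cont.tendsto x
  rwa [h_zero, ← funext h_norm] at h_lim

lemma mul_inner_eq_sum_inner_smul {ι : Type*} [Fintype ι] (V : ι → F) (g : F)
    {u w : EuclideanSpace ℝ ι} (hw : ∀ i, w i = ⟪V i, g⟫) (c : ℝ) :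
    c * ⟪u, w⟫ = ∑ i, ⟪V i, (c * u i) • g⟫ := by
  rw [PiLp.inner_apply, Finset.mul_sum]
  refine Finset.sum_congr rfl fun i _ => ?_
  simp only [RCLike.inner_apply, conj_trivial, real_inner_smul_right, hw]
  ring

lemma neg_sqrt_sum_norm_sq_le_sum_inner {ι : Type*} [Fintype ι] (G W : ι → F)
    (hW : ∑ i, ‖W i‖ ^ 2 ≤ 1) :
    -√(∑ i, ‖G i‖ ^ 2) ≤ ∑ i, ⟪G i, W i⟫ := by
  let G' : PiLp 2 fun _ : ι => F := WithLp.toLp 2 G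
  let W' : PiLp 2 fun _ : ι => F := WithLp.toLp 2 W
  have hW' : ‖W'‖ ≤ 1 := by
    rw [PiLp.norm_eq_of_L2]
    exact Real.sqrt_le_one.2 hW
  calc -√(∑ i, ‖G i‖ ^ 2) = -‖G'‖ := by rw [PiLp.norm_eq_of_L2]
    _ ≤ -(‖G'‖ * ‖W'‖) := neg_le_neg (mul_le_of_le_one_right (norm_nonneg _) hW')
    _ ≤ ⟪G', W'⟫ := neg_le_of_abs_le (abs_real_inner_le_norm _ _)
    _ = ∑ i, ⟪G i, W i⟫ := PiLp.inner_apply _ _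

variable [CompleteSpace F]

lemma integral_sum_inner {X ι : Type*} [MeasurableSpace X] {μ : Measure X} (s : Finset ι)
    {f : ι → X → F} (hf : ∀ i ∈ s, Integrable (f i) μ) (V : ι → F) :
    ∫ x, ∑ i ∈ s, ⟪V i, f i x⟫ ∂μ = ∑ i ∈ s, ⟪V i, ∫ x, f i x ∂μ⟫ := by
  rw [integral_finsetSum _ fun i hi => (hf i hi).const_inner _]
  exact Finset.sum_congr rfl fun i hi => integral_inner (hf i hi) _

lemma integral_integral_sum_inner {X Y ι : Type*} [MeasurableSpace X] [MeasurableSpace Y]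
    [Fintype ι] {μ : Measure X} {ν : Measure Y} {f : ι → X → Y → F}
    (hf : ∀ i x, Integrable (f i x) ν) (hF : ∀ i, Integrable (fun x => ∫ y, f i x y ∂ν) μ)
    (V : ι → F) :
    ∫ x, ∫ y, ∑ i, ⟪V i, f i x y⟫ ∂ν ∂μ = ∑ i, ⟪V i, ∫ x, ∫ y, f i x y ∂ν ∂μ⟫ := by
  simp_rw [fun x => integral_sum_inner Finset.univ (fun i _ => hf i x) V]
  exact integral_sum_inner _ (fun i _ => hF i) V

end InnerProduct

end

theorem stmt_19_general {n m : ℕ} (b γ : ℝ) (hb : 0 < b)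
    {Fγ : Type*} [NormedAddCommGroup Fγ] [InnerProductSpace ℝ Fγ] [CompleteSpace Fγ]
    (φγ : (EuclideanSpace ℝ (Fin n) × EuclideanSpace ℝ (Fin m)) → Fγ)
    (hφγ : ∀ z z', (inner ℝ (φγ z) (φγ z') : ℝ) =
      Real.exp (-(‖z.1 - z'.1‖ ^ 2 + ‖z.2 - z'.2‖ ^ 2) / γ ^ 2))
    (k : (EuclideanSpace ℝ (Fin n) × EuclideanSpace ℝ (Fin m)) →
         (EuclideanSpace ℝ (Fin n) × EuclideanSpace ℝ (Fin m)) → ℝ)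
    (hk : ∀ z z', k z z' =
      Real.exp (-(‖z.1 - z'.1‖ ^ 2 + ‖z.2 - z'.2‖ ^ 2) / b ^ 2))
    (πx : Measure (EuclideanSpace ℝ (Fin n))) (πy : Measure (EuclideanSpace ℝ (Fin m)))
    [IsProbabilityMeasure πx] [IsProbabilityMeasure πy]
    (πxy : Measure (EuclideanSpace ℝ (Fin n) × EuclideanSpace ℝ (Fin m)))
    [IsProbabilityMeasure πxy]
    -- the components of `v` lie in `F_γ`: `v_i(z) = ⟪V_i, φγ z⟫`
    (V : Fin n → Fγ)
    (v : (EuclideanSpace ℝ (Fin n) × EuclideanSpace ℝ (Fin m)) → EuclideanSpace ℝ (Fin n))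
    (hv : ∀ z i, v z i = (inner ℝ (V i) (φγ z) : ℝ))
    -- the kernel-smoothed gradient field `G_i ∈ F_γ` (Bochner integrals)
    (G : Fin n → Fγ)
    (hG : ∀ i, G i =
      (-(2 / b ^ 2)) • (∫ z, ∫ z', (k z z' * (z.1 i - z'.1 i)) • (φγ z - φγ z')
          ∂(πx.prod πy) ∂(πx.prod πy))
      + (4 / b ^ 2) • ∫ z, ∫ w, (k z w * (z.1 i - w.1 i)) • φγ z ∂πxy ∂(πx.prod πy))
    -- integrability of the vector-valued integrands
    (hint1 : ∀ i, Integrable (fun z =>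
      ∫ z', (k z z' * (z.1 i - z'.1 i)) • (φγ z - φγ z') ∂(πx.prod πy)) (πx.prod πy))
    (hint2 : ∀ i, Integrable (fun z =>
      ∫ w, (k z w * (z.1 i - w.1 i)) • φγ z ∂πxy) (πx.prod πy)) :
    (-(2 / b ^ 2) * (∫ z, ∫ z', k z z' * inner ℝ (z.1 - z'.1) (v z - v z')
          ∂(πx.prod πy) ∂(πx.prod πy))
      + (4 / b ^ 2) * ∫ z, ∫ w, k z w * inner ℝ (z.1 - w.1) (v z) ∂πxy ∂(πx.prod πy))
      = ∑ i, (inner ℝ (G i) (V i) : ℝ) ∧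
    ∀ W : Fin n → Fγ, (∑ i, ‖W i‖ ^ 2) ≤ 1 →
      -Real.sqrt (∑ i, ‖G i‖ ^ 2) ≤ ∑ i, (inner ℝ (G i) (W i) : ℝ) := by
  refine ⟨?_, neg_sqrt_sum_norm_sq_le_sum_inner G⟩
  obtain rfl : k = gaussKernel b := funext₂ hk
  have hφ_norm : ∀ z, ‖φγ z‖ = 1 := fun z =>
    (pow_eq_one_iff_of_nonneg (norm_nonneg _) two_ne_zero).1 <| by
      simpa [real_inner_self_eq_norm_sq] using hφγ z z
  have hφ_cont : Continuous φγ := continuous_of_continuous_inner (by simp_rw [hφγ]; fun_prop)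
  have h_diff : ∀ z z', gaussKernel b z z' * ⟪z.1 - z'.1, v z - v z'⟫ =
      ∑ i, ⟪V i, (gaussKernel b z z' * (z.1 i - z'.1 i)) • (φγ z - φγ z')⟫ :=
    fun z z' => mul_inner_eq_sum_inner_smul V _ (fun i => by simp [hv, inner_sub_right]) _
  have h_point : ∀ z w, gaussKernel b z w * ⟪z.1 - w.1, v z⟫ =
      ∑ i, ⟪V i, (gaussKernel b z w * (z.1 i - w.1 i)) • φγ z⟫ :=
    fun z w => mul_inner_eq_sum_inner_smul V _ (hv z) _
  simp_rw [h_diff, h_point]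
  rw [integral_integral_sum_inner (fun i z => integrable_gaussKernel_mul_apply_sub_smul hb _ z i
      (g := fun w => φγ z - φγ w) (continuous_const.sub hφ_cont) fun w => (norm_sub_le _ _).trans_eq
        (by rw [hφ_norm, hφ_norm])) hint1,
    integral_integral_sum_inner (fun i z => integrable_gaussKernel_mul_apply_sub_smul hb _ z i
      (g := fun _ => φγ z) continuous_const fun _ => (hφ_norm z).le) hint2,
    Finset.mul_sum, Finset.mul_sum, ← Finset.sum_add_distrib]
  refine Finset.sum_congr rfl fun i _ => ?_
  rw [hG i, inner_add_left, real_inner_smul_left, real_inner_smul_left,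
    real_inner_comm (V i), real_inner_comm (V i)]

/-- Kernel representation of the steepest-descent direction of the squared MMD.  Let `F_γ` be the
RKHS of the Gaussian kernel `k_γ(z,z') = exp(-‖z-z'‖²/γ²)` with feature map `φγ`, and suppose each
component of the vector field `v` lies in `F_γ`, `v_i(z) = ⟪V_i, k_γ(z,·)⟫`.  Let `G_i ∈ F_γ` be
the kernel-smoothed gradient field
`G_i = -(2/b²) E[k(z̃,z̃') (k_γ(z̃,·)-k_γ(z̃',·)) (x̃_i-x̃'_i)] + (4/b²) E[k(z̃,z̄) k_γ(z̃,·) (x̃_i-x̄_i)]`,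
so that `∇MMD²(z)_i = ⟪G_i, k_γ(z,·)⟫` is the formula of the paper.  Then the Gâteaux-derivative
functional satisfies `D_v MMD² = ⟨∇MMD², v⟩_{F_γ} = ∑ i ⟪G_i, V_i⟫`, and over the unit ball of
`F_γⁿ` the functional is bounded below by `-‖G‖` (attained by the steepest-descent direction
`v = -∇MMD²/‖∇MMD²‖`). -/
theorem stmt_19 {n m : ℕ} (b γ : ℝ) (hb : 0 < b) (hγ : 0 < γ)
    {Fγ : Type*} [NormedAddCommGroup Fγ] [InnerProductSpace ℝ Fγ] [CompleteSpace Fγ]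
    (φγ : (EuclideanSpace ℝ (Fin n) × EuclideanSpace ℝ (Fin m)) → Fγ)
    (hφγ : ∀ z z', (inner ℝ (φγ z) (φγ z') : ℝ) =
      Real.exp (-(‖z.1 - z'.1‖ ^ 2 + ‖z.2 - z'.2‖ ^ 2) / γ ^ 2))
    (k : (EuclideanSpace ℝ (Fin n) × EuclideanSpace ℝ (Fin m)) →
         (EuclideanSpace ℝ (Fin n) × EuclideanSpace ℝ (Fin m)) → ℝ)
    (hk : ∀ z z', k z z' =
      Real.exp (-(‖z.1 - z'.1‖ ^ 2 + ‖z.2 - z'.2‖ ^ 2) / b ^ 2))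
    (πx : Measure (EuclideanSpace ℝ (Fin n))) (πy : Measure (EuclideanSpace ℝ (Fin m)))
    [IsProbabilityMeasure πx] [IsProbabilityMeasure πy]
    (πxy : Measure (EuclideanSpace ℝ (Fin n) × EuclideanSpace ℝ (Fin m)))
    [IsProbabilityMeasure πxy]
    -- the components of `v` lie in `F_γ`: `v_i(z) = ⟪V_i, φγ z⟫`
    (V : Fin n → Fγ)
    (v : (EuclideanSpace ℝ (Fin n) × EuclideanSpace ℝ (Fin m)) → EuclideanSpace ℝ (Fin n))
    (hv : ∀ z i, v z i = (inner ℝ (V i) (φγ z) : ℝ))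
    -- the kernel-smoothed gradient field `G_i ∈ F_γ` (Bochner integrals)
    (G : Fin n → Fγ)
    (hG : ∀ i, G i =
      (-(2 / b ^ 2)) • (∫ z, ∫ z', (k z z' * (z.1 i - z'.1 i)) • (φγ z - φγ z')
          ∂(πx.prod πy) ∂(πx.prod πy))
      + (4 / b ^ 2) • ∫ z, ∫ w, (k z w * (z.1 i - w.1 i)) • φγ z ∂πxy ∂(πx.prod πy))
    -- integrability of the vector-valued integrands
    (hint1 : ∀ i, Integrable (fun z =>
      ∫ z', (k z z' * (z.1 i - z'.1 i)) • (φγ z - φγ z') ∂(πx.prod πy)) (πx.prod πy))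
    (hint2 : ∀ i, Integrable (fun z =>
      ∫ w, (k z w * (z.1 i - w.1 i)) • φγ z ∂πxy) (πx.prod πy)) :
    (-(2 / b ^ 2) * (∫ z, ∫ z', k z z' * inner ℝ (z.1 - z'.1) (v z - v z')
          ∂(πx.prod πy) ∂(πx.prod πy))
      + (4 / b ^ 2) * ∫ z, ∫ w, k z w * inner ℝ (z.1 - w.1) (v z) ∂πxy ∂(πx.prod πy))
      = ∑ i, (inner ℝ (G i) (V i) : ℝ) ∧
    ∀ W : Fin n → Fγ, (∑ i, ‖W i‖ ^ 2) ≤ 1 →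
      -Real.sqrt (∑ i, ‖G i‖ ^ 2) ≤ ∑ i, (inner ℝ (G i) (W i) : ℝ) :=
  stmt_19_general b γ hb φγ hφγ k hk πx πy πxy V v hv G hG hint1 hint2
end
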